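/- Let S be a finite subgroup of the generalized Pauli group G_d on ℂ^d. If no nontrivial scalar multiple of the identity lies in S (i.e., αI ∈ S implies α = 1), then the fixed subspace V_S is nonzero and dim V_S = d / |S|. -/

import Mathlib

noncomputable def omega (d : ℕ) : ℂ := Complex.exp (2 * Real.pi * Complex.I / d)

noncomputable def zeta (d : ℕ) : ℂ := Complex.exp (Real.pi * Complex.I / d)

noncomputable def shiftX (d : ℕ) [NeZero d] : Matrix (Fin d) (Fin d) ℂ :=
  fun i j => if i = j + 1 then 1 else 0

noncomputable def clockZ (d : ℕ) [NeZero d] : Matrix (Fin d) (Fin d) ℂ :=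
  Matrix.diagonal fun x => omega d ^ (x : ℕ)
noncomputable def fixedSubspace (d : ℕ)
    (S : Subgroup (Matrix.GeneralLinearGroup (Fin d) ℂ)) : Submodule ℂ (Fin d → ℂ) :=
  ⨅ g ∈ S, LinearMap.ker
    (Matrix.toLin' ((g : Matrix.GeneralLinearGroup (Fin d) ℂ) : Matrix (Fin d) (Fin d) ℂ)
      - LinearMap.id)


/-! The averaging operator `|S|⁻¹ ∑_{g ∈ S} g` is a projection onto `V_S`, so
`dim V_S · |S| = ∑_{g ∈ S} tr g`. Every element of `G_d` is a scalar multiple of a matrix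
`X^p Z^q`, which is either the identity or traceless; as `S` contains no nontrivial scalar, only
`g = 1` contributes to the sum, and `dim V_S · |S| = d`. -/

open Matrix Fin.NatCast

def Matrix.GeneralLinearGroup.toRepresentation (n K : Type*) [Fintype n] [DecidableEq n]
    [CommRing K] : Representation K (GL n K) (n → K) :=
  (toLinAlgEquiv' : Matrix n n K ≃ₐ[K] Module.End K (n → K)).toMonoidHom.comp (Units.coeHom _)

lemma fixedSubspace_eq_invariants (d : ℕ) (S : Subgroup (GL (Fin d) ℂ)) :
    fixedSubspace d S =
      Representation.invariants
        ((GeneralLinearGroup.toRepresentation (Fin d) ℂ).comp S.subtype) := by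
  ext v
  simp [fixedSubspace, Representation.mem_invariants, GeneralLinearGroup.toRepresentation,
    sub_eq_zero]

lemma finrank_fixedSubspace_mul_card (d : ℕ) (S : Subgroup (GL (Fin d) ℂ)) [Fintype S] :
    (Module.finrank ℂ (fixedSubspace d S) * Fintype.card S : ℂ) =
      ∑ g : S, trace ((g : GL (Fin d) ℂ) : Matrix (Fin d) (Fin d) ℂ) := by
  have hS : (Nat.card S : ℂ) ≠ 0 := Nat.cast_ne_zero.mpr Nat.card_pos.ne'
  have := invertibleOfNonzero hS
  have h := FDRep.average_char_eq_finrank_invariants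
    (FDRep.of ((GeneralLinearGroup.toRepresentation (Fin d) ℂ).comp S.subtype))
  rw [FDRep.of_ρ', ← fixedSubspace_eq_invariants] at h
  rw [← h, Fintype.card_eq_nat_card, mul_comm, mul_inv_cancel_left₀ hS]
  exact Finset.sum_congr rfl fun g _ => trace_toLin'_eq _

lemma sum_trace_eq_card_of_trace_eq_zero {n K : Type*} [Fintype n] [DecidableEq n]
    [CommRing K] (S : Subgroup (GL n K)) [Fintype S]
    (h : ∀ g : S, g ≠ 1 → trace ((g : GL n K) : Matrix n n K) = 0) :
    ∑ g : S, trace ((g : GL n K) : Matrix n n K) = Fintype.card n := by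
  rw [Fintype.sum_eq_single 1 h]
  simp

section Pauli

variable {d : ℕ} [NeZero d]

lemma omega_pow_self : omega d ^ d = 1 :=
  (Complex.isPrimitiveRoot_exp d (NeZero.ne d)).pow_eq_one

lemma shiftX_pow_apply (p : ℕ) (i j : Fin d) :
    (shiftX d ^ p) i j = if i = j + p then 1 else 0 := by
  induction p generalizing j with
  | zero => simp [one_apply]
  | succ p ih =>
    rw [pow_succ, mul_apply, Finset.sum_eq_single (j + 1)]
    · simp [ih, shiftX, add_right_comm, add_assoc]
    · intro k _ hk
      simp [shiftX, hk]
    · simp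

lemma shiftX_pow_eq_one {p : ℕ} (hp : (p : Fin d) = 0) : shiftX d ^ p = 1 := by
  ext i j
  simp [shiftX_pow_apply, hp, one_apply]

lemma clockZ_pow (q : ℕ) :
    clockZ d ^ q = diagonal fun i : Fin d => (omega d ^ q) ^ (i : ℕ) := by
  rw [clockZ, diagonal_pow]
  congr 1
  funext i
  simp only [Pi.pow_apply, ← pow_mul, mul_comm]

lemma clockZ_pow_eq_one {q : ℕ} (hq : omega d ^ q = 1) : clockZ d ^ q = 1 := by
  simp [clockZ_pow, hq]

lemma trace_clockZ_pow {q : ℕ} (hq : omega d ^ q ≠ 1) : trace (clockZ d ^ q) = 0 := by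
  rw [clockZ_pow, trace_diagonal, Fin.sum_univ_eq_sum_range (fun i => (omega d ^ q) ^ i),
    geom_sum_eq hq, ← pow_mul, mul_comm, pow_mul, omega_pow_self, one_pow, sub_self, zero_div]

lemma trace_shiftX_pow_mul_clockZ_pow {p : ℕ} (hp : (p : Fin d) ≠ 0) (q : ℕ) :
    trace (shiftX d ^ p * clockZ d ^ q) = 0 := by
  refine Finset.sum_eq_zero fun i _ => ?_
  simp [clockZ_pow, shiftX_pow_apply, hp]

lemma trace_shiftX_pow_mul_clockZ_pow_eq_zero_or (p q : ℕ) :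
    trace (shiftX d ^ p * clockZ d ^ q) = 0 ∨ shiftX d ^ p * clockZ d ^ q = 1 := by
  by_cases hp : (p : Fin d) = 0
  · rw [shiftX_pow_eq_one hp, one_mul]
    by_cases hq : omega d ^ q = 1
    · exact .inr (clockZ_pow_eq_one hq)
    · exact .inl (trace_clockZ_pow hq)
  · exact .inl (trace_shiftX_pow_mul_clockZ_pow hp q)

lemma trace_eq_zero_of_eq_smul_pauli {g : Matrix (Fin d) (Fin d) ℂ} {c p q : ℕ}
    (hg : g = zeta d ^ c • (shiftX d ^ p * clockZ d ^ q))
    (hscalar : ∀ α : ℂ, g = α • 1 → α = 1) (hne : g ≠ 1) : trace g = 0 := by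
  rcases trace_shiftX_pow_mul_clockZ_pow_eq_zero_or (d := d) p q with htr | hone
  · rw [hg, trace_smul, htr, smul_zero]
  · rw [hone] at hg
    exact (hne (by rw [hg, hscalar _ hg, one_smul])).elim

end Pauli

theorem fixed_nontrivial_of_pauli_stabilizer (d : ℕ) [NeZero d]
    (S : Subgroup (Matrix.GeneralLinearGroup (Fin d) ℂ)) [Fintype S]
    (hpauli : ∀ g ∈ S, ∃ c p q : ℕ,
      ((g : Matrix.GeneralLinearGroup (Fin d) ℂ) : Matrix (Fin d) (Fin d) ℂ)
        = zeta d ^ c • (shiftX d ^ p * clockZ d ^ q))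
    (hscalar : ∀ g ∈ S, ∀ α : ℂ,
      ((g : Matrix.GeneralLinearGroup (Fin d) ℂ) : Matrix (Fin d) (Fin d) ℂ)
        = α • (1 : Matrix (Fin d) (Fin d) ℂ) → α = 1) :
    fixedSubspace d S ≠ ⊥ ∧
      Module.finrank ℂ (fixedSubspace d S) * Fintype.card S = d := by
  have htrace : ∀ g : S, g ≠ 1 →
      trace ((g : GL (Fin d) ℂ) : Matrix (Fin d) (Fin d) ℂ) = 0 := by
    intro g hg
    obtain ⟨c, p, q, hgpauli⟩ := hpauli g g.2
    exact trace_eq_zero_of_eq_smul_pauli hgpauli (hscalar g g.2)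
      fun h => hg (Subtype.ext (Units.ext h))
  have hdim : Module.finrank ℂ (fixedSubspace d S) * Fintype.card S = d := by
    have h := sum_trace_eq_card_of_trace_eq_zero S htrace
    rw [← finrank_fixedSubspace_mul_card, Fintype.card_fin] at h
    exact_mod_cast h
  refine ⟨fun hbot => NeZero.ne d ?_, hdim⟩
  rw [← hdim, hbot, finrank_bot, zero_mul]
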